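/- The noisy-or function, noisy-or(r_1,…,r_m) = 1 − ∏_{i=1}^m (1 − r_i), is not an admissible aggregation function: there exist sequences of tuples (r_n) and (ρ_n) in [0,1]^{<ω}, both convergence testing for the same parameters c_1 = 0 and α_1 = 1, such that |noisy-or(r_n) − noisy-or(ρ_n)| does not converge to 0 as n → ∞. -/
import Mathlib


open Filter Set Topology

/-- A tuple in `[0,1]^{<ω}`: a finite nonempty sequence of reals in `[0,1]`. -/
def IsTuple (r : List ℝ) : Prop := r ≠ [] ∧ ∀ x ∈ r, x ∈ Set.Icc (0:ℝ) 1

/-- A (relatively) open interval of `[0,1]`. -/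
def OpenIntIn01 (I : Set ℝ) : Prop := ∃ a b : ℝ, I = Set.Ioo a b ∩ Set.Icc 0 1

open Classical in
/-- The number of entries of the tuple `r` lying in the set `I`. -/
noncomputable def countIn (r : List ℝ) (I : Set ℝ) : ℕ :=
  (r.map fun x => if x ∈ I then (1:ℕ) else 0).sum

/-- The sequence of tuples `r` is convergence testing for parameters `c j` and `α j`. -/
def ConvTest {k : ℕ} (r : ℕ → List ℝ) (c α : Fin k → ℝ) : Prop :=
  (∀ n, IsTuple (r n)) ∧
  (∀ n, (r n).length < (r (n+1)).length) ∧
  (∀ I : Fin k → Set ℝ,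
    (∀ j, OpenIntIn01 (I j)) →
    (∀ j j', j ≠ j' → Disjoint (I j) (I j')) →
    (∀ j, c j ∈ I j) →
    ((∃ N, ∀ n ≥ N, ∀ x ∈ r n, x ∈ ⋃ j, I j) ∧
     (∀ j, Tendsto (fun n => (countIn (r n) (I j) : ℝ) / (r n).length)
        atTop (𝓝 (α j)))))

/-- The noisy-or aggregation function: `1 - ∏ i (1 - r i)`. -/
noncomputable def noisyOr (r : List ℝ) : ℝ := 1 - (r.map fun x => 1 - x).prod

open Classical in
lemma countIn_replicate (m : ℕ) (x : ℝ) (I : Set ℝ) :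
    countIn (List.replicate m x) I = if x ∈ I then m else 0 := by
  simp only [countIn, List.map_replicate, List.sum_replicate, smul_eq_mul]
  split <;> simp

lemma convTest_replicate (a : ℕ → ℝ) (h0 : ∀ n, a n ∈ Set.Icc (0:ℝ) 1)
    (ha : Tendsto a atTop (𝓝 0)) :
    ConvTest (fun n => List.replicate (n+1) (a n))
      (fun _ : Fin 1 => (0:ℝ)) (fun _ : Fin 1 => (1:ℝ)) := by
  classical
  refine ⟨?_, ?_, ?_⟩
  · intro n
    refine ⟨by simp, ?_⟩
    intro x hx
    rw [List.mem_replicate] at hx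
    exact hx.2 ▸ h0 n
  · intro n; simp
  · intro I hopen _ hc
    obtain ⟨A, B, hI⟩ := hopen 0
    have h0I : (0:ℝ) ∈ I 0 := hc 0
    rw [hI] at h0I
    obtain ⟨⟨hA, hB⟩, _⟩ := h0I
    have hmem : ∀ᶠ n in atTop, a n ∈ I 0 := by
      have h1 : ∀ᶠ n in atTop, a n > A := ha.eventually (eventually_gt_nhds hA)
      have h2 : ∀ᶠ n in atTop, a n < B := ha.eventually (eventually_lt_nhds hB)
      filter_upwards [h1, h2] with n hn1 hn2
      rw [hI]; exact ⟨⟨hn1, hn2⟩, h0 n⟩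
    obtain ⟨N, hN⟩ := eventually_atTop.1 hmem
    constructor
    · refine ⟨N, fun n hn x hx => ?_⟩
      rw [List.mem_replicate] at hx
      exact Set.mem_iUnion.2 ⟨0, hx.2 ▸ hN n hn⟩
    · intro j
      have hj : j = 0 := Subsingleton.elim j 0
      subst hj
      have : (fun n => (countIn (List.replicate (n+1) (a n)) (I 0) : ℝ) / (List.replicate (n+1) (a n)).length)
          =ᶠ[atTop] fun _ => (1:ℝ) := by
        filter_upwards [hmem] with n hn
        rw [countIn_replicate]
        rw [if_pos hn, List.length_replicate]
        field_simp
      exact Tendsto.congr' this.symm tendsto_const_nhds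

/-- Noisy-or is not admissible: there are two sequences of tuples, both
convergence testing for the parameters `c₁ = 0` and `α₁ = 1`, on which the
values of noisy-or do not become asymptotically equal. -/
theorem noisyOr_not_admissible :
    ∃ r ρ : ℕ → List ℝ,
      ConvTest r (fun _ : Fin 1 => (0:ℝ)) (fun _ : Fin 1 => (1:ℝ)) ∧
      ConvTest ρ (fun _ : Fin 1 => (0:ℝ)) (fun _ : Fin 1 => (1:ℝ)) ∧
      ¬ Tendsto (fun n => |noisyOr (r n) - noisyOr (ρ n)|) atTop (𝓝 0) := by
  refine ⟨fun n => List.replicate (n+1) 0,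
          fun n => List.replicate (n+1) (1/(n+1:ℝ)), ?_, ?_, ?_⟩
  · exact convTest_replicate (fun _ => 0) (fun n => by norm_num) tendsto_const_nhds
  · refine convTest_replicate _ (fun n => ?_) ?_
    · constructor
      · positivity
      · rw [div_le_one (by positivity)]; norm_num
    · exact tendsto_one_div_add_atTop_nhds_zero_nat
  · intro h
    have key : ∀ n : ℕ, |noisyOr (List.replicate (n+1) (0:ℝ)) -
        noisyOr (List.replicate (n+1) (1/(n+1:ℝ)))| ≥ 1/2 := by
      intro n
      have h1 : noisyOr (List.replicate (n+1) (0:ℝ)) = 0 := by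
        simp [noisyOr, List.map_replicate, List.prod_replicate]
      have h2 : noisyOr (List.replicate (n+1) (1/(n+1:ℝ)))
          = 1 - (1 - 1/(n+1:ℝ))^(n+1) := by
        simp [noisyOr, List.map_replicate, List.prod_replicate]
      rw [h1, h2]
      have hb : (1 - 1/(n+1:ℝ))^(n+1) ≤ 1/2 := by
        have hle : (1 - 1/(n+1:ℝ)) ≤ Real.exp (-(1/(n+1:ℝ))) := by
          have := Real.add_one_le_exp (-(1/(n+1:ℝ)))
          linarith
        have hnn : (0:ℝ) ≤ 1 - 1/(n+1:ℝ) := by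
          have : 1/(n+1:ℝ) ≤ 1 := by
            rw [div_le_one (by positivity)]; norm_num
          linarith
        calc (1 - 1/(n+1:ℝ))^(n+1) ≤ (Real.exp (-(1/(n+1:ℝ))))^(n+1) :=
              pow_le_pow_left₀ hnn hle _
          _ = Real.exp (-1) := by
              rw [← Real.exp_nat_mul]
              congr 1
              push_cast
              field_simp
          _ ≤ 1/2 := by
              rw [Real.exp_neg]
              rw [inv_le_comm₀ (Real.exp_pos 1) (by norm_num)]
              have := Real.add_one_le_exp (1:ℝ)
              linarith
      have hnn2 : (0:ℝ) ≤ 1 - 1/(n+1:ℝ) := by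
        have : 1/(n+1:ℝ) ≤ 1 := by
          rw [div_le_one (by positivity)]; norm_num
        linarith
      have hp1 : (1 - 1/(n+1:ℝ))^(n+1) ≤ 1 := by
        apply pow_le_one₀ hnn2
        have : (0:ℝ) ≤ 1/(n+1:ℝ) := by positivity
        linarith
      rw [abs_sub_comm, sub_zero, abs_of_nonneg (by linarith)]
      linarith
    have := (h.eventually (eventually_lt_nhds (by norm_num : (0:ℝ) < 1/2))).exists
    obtain ⟨n, hn⟩ := this
    have := key n
    simp only at hn
    linarith [abs_nonneg (noisyOr (List.replicate (n+1) (0:ℝ)) - noisyOr (List.replicate (n+1) (1/(n+1:ℝ))))]
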